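/- arXiv:math/0409456 — 6 statements merged into one kernel-verified Lean document; each statement's English description precedes it below -/
import Mathlib

section
/- Let B be a complete Hausdorff topological field of characteristic zero and R a B-vector space with the inductive limit topology from its finite-dimensional subspaces. Then every vector subspace of R is closed, and R is Hausdorff. -/
/-- The canonical topology on a finite-dimensional vector space `V` over a
topological field `B`. -/
noncomputable def canonicalFDTopology (B V : Type*) [Field B] [TopologicalSpace B]
    [AddCommGroup V] [Module B V] [FiniteDimensional B V] : TopologicalSpace V :=
  TopologicalSpace.induced (Module.finBasis B V).equivFun Pi.topologicalSpace

/-- The inductive limit topology on a `B`-vector space `R` coming from its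
finite-dimensional subspaces. -/
noncomputable def indLimTopology (B R : Type*) [Field B] [TopologicalSpace B]
    [AddCommGroup R] [Module B R] : TopologicalSpace R :=
  ⨆ (V : Submodule B R) (h : FiniteDimensional B V),
    TopologicalSpace.coinduced (Subtype.val : V → R) (@canonicalFDTopology B V _ _ _ _ h)

/-! Every linear map out of `R` is continuous for the inductive limit topology, being continuous
on each finite-dimensional subspace. A subspace is the intersection of the kernels of the
functionals vanishing on it, hence closed, and the functionals separate points. -/

theorem continuous_linearMap_canonicalFDTopology {B V M : Type*} [Field B] [TopologicalSpace B]
    [AddCommGroup V] [Module B V] [FiniteDimensional B V] [AddCommMonoid M] [Module B M]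
    [TopologicalSpace M] [ContinuousAdd M] [ContinuousSMul B M] (f : V →ₗ[B] M) :
    @Continuous V M (canonicalFDTopology B V) _ f := by
  let := canonicalFDTopology B V
  let e := (Module.finBasis B V).equivFun
  have hf : ⇑f = (f ∘ₗ e.symm.toLinearMap) ∘ e := by ext v; simp
  rw [hf]
  exact (f ∘ₗ e.symm.toLinearMap).continuous_on_pi.comp continuous_induced_dom

theorem continuous_indLimTopology_iff {B R X : Type*} [Field B] [TopologicalSpace B]
    [AddCommGroup R] [Module B R] [TopologicalSpace X] {g : R → X} :
    @Continuous R X (indLimTopology B R) _ g ↔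
      ∀ (V : Submodule B R) [FiniteDimensional B V],
        @Continuous V X (canonicalFDTopology B V) _ (g ∘ Subtype.val) := by
  rw [indLimTopology]
  simp only [continuous_iSup_dom, continuous_coinduced_dom]

theorem continuous_linearMap_indLimTopology {B R M : Type*} [Field B] [TopologicalSpace B]
    [AddCommGroup R] [Module B R] [AddCommMonoid M] [Module B M]
    [TopologicalSpace M] [ContinuousAdd M] [ContinuousSMul B M] (f : R →ₗ[B] M) :
    @Continuous R M (indLimTopology B R) _ f :=
  continuous_indLimTopology_iff.2 fun V _ =>
    continuous_linearMap_canonicalFDTopology (f ∘ₗ V.subtype)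

section ContinuousDual

variable {B R : Type*} [Field B] [TopologicalSpace B] [AddCommGroup R] [Module B R]
  [TopologicalSpace R]

theorem Submodule.isClosed_of_continuous_dual [T1Space B]
    (h : ∀ φ : Module.Dual B R, Continuous φ) (W : Submodule B R) : IsClosed (W : Set R) := by
  have hW : (W : Set R) = ⋂ φ ∈ W.dualAnnihilator, φ ⁻¹' {0} := by
    ext x
    simp [← Subspace.forall_mem_dualAnnihilator_apply_eq_zero_iff W x]
  rw [hW]
  exact isClosed_biInter fun φ _ => isClosed_singleton.preimage (h φ)

theorem t2Space_of_continuous_dual [T2Space B] (h : ∀ φ : Module.Dual B R, Continuous φ) :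
    T2Space R :=
  .of_injective_continuous (f := fun x (φ : Module.Dual B R) => φ x)
    (fun _ _ hxy => Module.eval_apply_injective B (LinearMap.ext (congrFun hxy)))
    (continuous_pi h)

end ContinuousDual

theorem subspace_closed_and_t2_indLim_general {B : Type*} [Field B] [UniformSpace B]
    [T2Space B] [IsTopologicalRing B]
    {R : Type*} [AddCommGroup R] [Module B R] :
    (∀ W : Submodule B R, @IsClosed R (indLimTopology B R) (W : Set R)) ∧
    @T2Space R (indLimTopology B R) := by
  let : TopologicalSpace R := indLimTopology B R
  have hdual (φ : Module.Dual B R) : Continuous φ := continuous_linearMap_indLimTopology φ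
  exact ⟨Submodule.isClosed_of_continuous_dual hdual, t2Space_of_continuous_dual hdual⟩

/-- Over a complete Hausdorff topological field `B` of
characteristic zero, in the inductive limit topology on a `B`-vector space `R`
every vector subspace is closed, and `R` is Hausdorff. -/
theorem subspace_closed_and_t2_indLim {B : Type*} [Field B] [UniformSpace B]
    [CompleteSpace B] [T2Space B] [IsTopologicalRing B] [IsTopologicalDivisionRing B] [CharZero B]
    {R : Type*} [AddCommGroup R] [Module B R] :
    (∀ W : Submodule B R, @IsClosed R (indLimTopology B R) (W : Set R)) ∧
    @T2Space R (indLimTopology B R) :=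
  subspace_closed_and_t2_indLim_general
end

section
/- Let R be a B-algebra, where B is a complete Hausdorff topological field of characteristic zero, and equip R (and each affine space Rⁿ) with the inductive limit topology from finite-dimensional B-subspaces. Then any polynomial map f : Rⁿ → Rᵏ (each coordinate given by a polynomial with coefficients in R) is continuous. -/
/-!
On a finite-dimensional subspace `V` of `Rⁿ`, the coordinates are linear, so they take values in a
finite-dimensional subspace of `R` and are continuous after every linear functional. Both properties
survive sums and products (a product `a * b` with `a` in a finite-dimensional `W` is
`∑ κᵢ(a) • eᵢ * b` for finitely many functionals `κᵢ` and vectors `eᵢ`), hence pass to polynomial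
expressions in the coordinates. A map with these two properties is continuous into the canonical
topology of the finite-dimensional subspace containing its values, hence into the inductive limit
topology; and continuity on each `V` is continuity on `Rⁿ`.
-/

open Topology

theorem Submodule.exists_sum_smul_eq {B M : Type*} [Field B] [AddCommGroup M] [Module B M]
    (W : Submodule B M) [FiniteDimensional B W] :
    ∃ (e : Fin (Module.finrank B W) → M) (κ : Fin (Module.finrank B W) → M →ₗ[B] B),
      ∀ a ∈ W, ∑ i, κ i a • e i = a := by
  let b := Module.finBasis B W
  choose κ hκ using fun i => LinearMap.exists_extend (b.coord i)
  refine ⟨fun i => b i, κ, fun a ha => ?_⟩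
  have hrepr := congrArg W.subtype (b.sum_repr ⟨a, ha⟩)
  simp only [map_sum, map_smul, Submodule.subtype_apply] at hrepr
  have hκa (i) : κ i a = b.repr ⟨a, ha⟩ i := LinearMap.congr_fun (hκ i) ⟨a, ha⟩
  simpa only [hκa] using hrepr

section TopologicalField

variable {B : Type*} [Field B] [TopologicalSpace B]
variable {M : Type*} [AddCommGroup M] [Module B M]

theorem continuous_indLimTopology_iff_s2 {Y : Type*} {tY : TopologicalSpace Y} {g : M → Y} :
    Continuous[indLimTopology B M, tY] g ↔
      ∀ (V : Submodule B M) [FiniteDimensional B V],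
        Continuous[canonicalFDTopology B V, tY] fun v : V => g v := by
  unfold indLimTopology
  simp only [continuous_iSup_dom, continuous_coinduced_dom]
  rfl

theorem continuous_subtype_val_indLimTopology (V : Submodule B M) [FiniteDimensional B V] :
    Continuous[canonicalFDTopology B V, indLimTopology B M] Subtype.val :=
  continuous_iSup_rng (continuous_iSup_rng continuous_coinduced_rng)

theorem LinearMap.continuous_canonicalFDTopology [ContinuousAdd B] [ContinuousMul B]
    {V : Type*} [AddCommGroup V] [Module B V] [FiniteDimensional B V] (φ : V →ₗ[B] B) :
    Continuous[canonicalFDTopology B V, _] φ := by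
  let := canonicalFDTopology B V
  let e := (Module.finBasis B V).equivFun
  have h : Continuous fun v => (φ ∘ₗ e.symm.toLinearMap) (e v) :=
    (LinearMap.continuous_on_pi _).comp continuous_induced_dom
  simpa using h

end TopologicalField

def IsFinDimContinuous (B : Type*) [Field B] [TopologicalSpace B] {X M : Type*}
    [TopologicalSpace X] [AddCommGroup M] [Module B M] (f : X → M) : Prop :=
  ∃ W : Submodule B M, FiniteDimensional B W ∧ (∀ x, f x ∈ W) ∧
    ∀ ℓ : M →ₗ[B] B, Continuous fun x => ℓ (f x)

namespace IsFinDimContinuous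

variable {B : Type*} [Field B] [TopologicalSpace B] {X : Type*} [TopologicalSpace X]

section Module

variable {M N : Type*} [AddCommGroup M] [Module B M] [AddCommGroup N] [Module B N]

theorem const (a : M) : IsFinDimContinuous B fun _ : X => a :=
  ⟨B ∙ a, inferInstance, fun _ => Submodule.mem_span_singleton_self a, fun _ => continuous_const⟩

theorem add [ContinuousAdd B] {f g : X → M} (hf : IsFinDimContinuous B f)
    (hg : IsFinDimContinuous B g) : IsFinDimContinuous B fun x => f x + g x := by
  obtain ⟨W₁, _, hW₁, hf⟩ := hf
  obtain ⟨W₂, _, hW₂, hg⟩ := hg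
  refine ⟨W₁ ⊔ W₂, inferInstance,
    fun x => Submodule.add_mem_sup (hW₁ x) (hW₂ x), fun ℓ => ?_⟩
  simp only [map_add]
  exact (hf ℓ).add (hg ℓ)

theorem finset_sum [ContinuousAdd B] {ι : Type*} (s : Finset ι) {f : ι → X → M}
    (hf : ∀ i ∈ s, IsFinDimContinuous B (f i)) :
    IsFinDimContinuous B fun x => ∑ i ∈ s, f i x := by
  classical
  induction s using Finset.induction_on with
  | empty => simpa using const (X := X) (0 : M)
  | insert i s hi ih =>
    simp only [Finset.sum_insert hi]
    exact (hf i (s.mem_insert_self i)).add (ih fun j hj => hf j (Finset.mem_insert_of_mem hj))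

theorem map {f : X → M} (hf : IsFinDimContinuous B f) (φ : M →ₗ[B] N) :
    IsFinDimContinuous B fun x => φ (f x) := by
  obtain ⟨W, _, hW, hf⟩ := hf
  exact ⟨W.map φ, inferInstance, fun x => Submodule.mem_map_of_mem (hW x),
    fun ℓ => hf (ℓ ∘ₗ φ)⟩

theorem pi [ContinuousAdd B] {ι : Type*} [Fintype ι] {f : ι → X → M}
    (hf : ∀ i, IsFinDimContinuous B (f i)) : IsFinDimContinuous B fun x i => f i x := by
  classical
  have h := finset_sum Finset.univ fun i _ => (hf i).map (LinearMap.single B (fun _ => M) i)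
  simpa only [LinearMap.coe_single, Finset.univ_sum_single] using h

theorem continuous_indLimTopology {f : X → M} (hf : IsFinDimContinuous B f) :
    Continuous[_, indLimTopology B M] f := by
  obtain ⟨W, _, hW, hf⟩ := hf
  let := canonicalFDTopology B W
  have hcod : Continuous fun x => (⟨f x, hW x⟩ : W) := by
    refine continuous_induced_rng.2 (continuous_pi fun i => ?_)
    obtain ⟨L, hL⟩ := LinearMap.exists_extend ((Module.finBasis B W).coord i)
    convert hf L using 2 with x
    exact (LinearMap.congr_fun hL ⟨f x, hW x⟩).symm
  let := indLimTopology B M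
  exact (continuous_subtype_val_indLimTopology W).comp hcod

end Module

section Algebra

variable [ContinuousAdd B] [ContinuousMul B]

theorem mul {R : Type*} [Ring R] [Algebra B R] {f g : X → R} (hf : IsFinDimContinuous B f)
    (hg : IsFinDimContinuous B g) : IsFinDimContinuous B fun x => f x * g x := by
  obtain ⟨W₁, _, hW₁, hf⟩ := hf
  obtain ⟨W₂, _, hW₂, hg⟩ := hg
  have hfin : FiniteDimensional B ↥(W₁ * W₂) := (Submodule.fg_iff_finiteDimensional _).1
    (((Submodule.fg_iff_finiteDimensional W₁).2 ‹_›).mul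
      ((Submodule.fg_iff_finiteDimensional W₂).2 ‹_›))
  refine ⟨W₁ * W₂, hfin, fun x => Submodule.mul_mem_mul (hW₁ x) (hW₂ x), fun ℓ => ?_⟩
  obtain ⟨e, κ, hκ⟩ := W₁.exists_sum_smul_eq
  have hexpand : ∀ x, ℓ (f x * g x) = ∑ i, κ i (f x) * ℓ (e i * g x) := fun x => by
    conv_lhs => rw [← hκ _ (hW₁ x)]
    simp [Finset.sum_mul]
  simp only [hexpand]
  exact continuous_finsetSum _ fun i _ => (hf (κ i)).mul (hg (ℓ ∘ₗ LinearMap.mulLeft B (e i)))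

theorem mvPolynomial_eval {R : Type*} [CommRing R] [Algebra B R] {σ : Type*} {x : σ → X → R}
    (hx : ∀ i, IsFinDimContinuous B (x i)) (q : MvPolynomial σ R) :
    IsFinDimContinuous B fun c => MvPolynomial.eval (fun i => x i c) q := by
  induction q using MvPolynomial.induction_on with
  | C a => simpa only [MvPolynomial.eval_C] using const a
  | add q₁ q₂ h₁ h₂ => simpa only [map_add] using h₁.add h₂
  | mul_X q i h => simpa only [map_mul, MvPolynomial.eval_X] using h.mul (hx i)

end Algebra

end IsFinDimContinuous

theorem LinearMap.isFinDimContinuous {B : Type*} [Field B] [TopologicalSpace B]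
    {V M : Type*} [AddCommGroup V] [Module B V] [FiniteDimensional B V] [TopologicalSpace V]
    [AddCommGroup M] [Module B M] (φ : V →ₗ[B] M) (hV : ∀ ℓ : V →ₗ[B] B, Continuous ℓ) :
    IsFinDimContinuous B φ :=
  ⟨LinearMap.range φ, inferInstance, LinearMap.mem_range_self φ, fun ℓ => hV (ℓ ∘ₗ φ)⟩

theorem polynomial_map_continuous_indLim_general {B : Type*} [Field B] [UniformSpace B]
    [IsTopologicalRing B]
    {R : Type*} [CommRing R] [Algebra B R]
    (n k : ℕ) (p : Fin k → MvPolynomial (Fin n) R) :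
    @Continuous (Fin n → R) (Fin k → R)
      (indLimTopology B (Fin n → R)) (indLimTopology B (Fin k → R))
      (fun x j => MvPolynomial.eval x (p j)) := by
  rw [continuous_indLimTopology_iff_s2]
  intro V _
  let := canonicalFDTopology B V
  have hcoord (i : Fin n) : IsFinDimContinuous B fun v : V => (v : Fin n → R) i :=
    (LinearMap.proj i ∘ₗ V.subtype).isFinDimContinuous LinearMap.continuous_canonicalFDTopology
  exact (IsFinDimContinuous.pi fun j =>
    IsFinDimContinuous.mvPolynomial_eval hcoord (p j)).continuous_indLimTopology

/-- For a `B`-algebra `R` over a complete Hausdorff topological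
field `B` of characteristic zero, with `Rⁿ` and `Rᵏ` carrying the inductive
limit topology from finite-dimensional `B`-subspaces, every polynomial map
`Rⁿ → Rᵏ` (each coordinate given by a polynomial with coefficients in `R`) is
continuous. -/
theorem polynomial_map_continuous_indLim {B : Type*} [Field B] [UniformSpace B]
    [CompleteSpace B] [T2Space B] [IsTopologicalRing B] [CharZero B]
    {R : Type*} [CommRing R] [Algebra B R]
    (n k : ℕ) (p : Fin k → MvPolynomial (Fin n) R) :
    @Continuous (Fin n → R) (Fin k → R)
      (indLimTopology B (Fin n → R)) (indLimTopology B (Fin k → R))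
      (fun x j => MvPolynomial.eval x (p j)) :=
  polynomial_map_continuous_indLim_general n k p
end

section
/- Let B be a complete Hausdorff topological field of characteristic zero, and let R be a B-vector space with the inductive limit topology coming from its finite-dimensional subspaces. If C ⊆ R is compact, then C is contained in a finite-dimensional subspace V ⊆ R. -/
/-!
A compact set `C` contains a linearly independent set `b` spanning the same subspace as `C`.
Every subset of `b` meets each finite-dimensional subspace in a finite set, which is closed
there, so every subset of `b` is closed in the inductive limit topology. Thus `b` is a compact
subset all of whose subsets are closed, hence finite, and `C ⊆ span b`.
-/

open Topology

theorem canonicalFDTopology_t1Space (B V : Type*) [Field B] [TopologicalSpace B] [T1Space B]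
    [AddCommGroup V] [Module B V] [FiniteDimensional B V] :
    @T1Space V (canonicalFDTopology B V) :=
  letI : TopologicalSpace V := canonicalFDTopology B V
  (IsEmbedding.mk ⟨rfl⟩ (Module.finBasis B V).equivFun.injective).t1Space

theorem LinearIndepOn.finite_preimage_subtype {K M : Type*} [DivisionRing K] [AddCommGroup M]
    [Module K M] {s : Set M} (hs : LinearIndepOn K id s) (V : Submodule K M)
    [FiniteDimensional K V] : ((↑) ⁻¹' s : Set V).Finite := by
  have hV : LinearIndepOn K id ((↑) ⁻¹' s : Set V) :=
    LinearIndepOn.of_comp V.subtype <|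
      (hs.mono (Set.image_preimage_subset _ _)).comp_of_image Subtype.val_injective.injOn
  exact LinearIndependent.setFinite hV

theorem isClosed_indLimTopology_of_linearIndepOn {B R : Type*} [Field B] [TopologicalSpace B]
    [T1Space B] [AddCommGroup R] [Module B R] {s : Set R} (hs : LinearIndepOn B id s) :
    IsClosed[indLimTopology B R] s := by
  rw [indLimTopology, isClosed_iSup_iff]
  intro V
  rw [isClosed_iSup_iff]
  intro hV
  rw [isClosed_coinduced]
  let _ := canonicalFDTopology B V
  have := canonicalFDTopology_t1Space B V
  exact (hs.finite_preimage_subtype V).isClosed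

theorem IsCompact.finite_of_forall_subset_isClosed {X : Type*} [TopologicalSpace X] {s : Set X}
    (hs : IsCompact s) (h : ∀ t ⊆ s, IsClosed t) : s.Finite := by
  have : DiscreteTopology s := discreteTopology_iff_forall_isClosed.mpr fun t ↦
    Set.preimage_image_eq t Subtype.val_injective ▸
      (h _ (Subtype.coe_image_subset s t)).preimage continuous_subtype_val
  exact hs.finite (isDiscrete_iff_discreteTopology.mpr this)

theorem compact_subset_finiteDimensional_indLim_general {B : Type*} [Field B] [UniformSpace B]
    [T2Space B]
    {R : Type*} [AddCommGroup R] [Module B R]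
    (C : Set R) (hC : @IsCompact R (indLimTopology B R) C) :
    ∃ V : Submodule B R, FiniteDimensional B ↥V ∧ C ⊆ (V : Set R) := by
  let _ := indLimTopology B R
  obtain ⟨b, hbC, hspan, hb⟩ := exists_linearIndependent B C
  have hb_closed : ∀ t ⊆ b, IsClosed t := fun t htb ↦
    isClosed_indLimTopology_of_linearIndepOn (LinearIndepOn.mono hb htb)
  have hb_finite : b.Finite :=
    (hC.of_isClosed_subset (hb_closed b le_rfl) hbC).finite_of_forall_subset_isClosed hb_closed
  exact ⟨Submodule.span B C, hspan ▸ FiniteDimensional.span_of_finite B hb_finite,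
    Submodule.subset_span⟩

/-- Over a complete Hausdorff topological field `B` of
characteristic zero, any compact subset of a `B`-vector space `R` with the
inductive limit topology is contained in a finite-dimensional subspace. -/
theorem compact_subset_finiteDimensional_indLim {B : Type*} [Field B] [UniformSpace B]
    [CompleteSpace B] [T2Space B] [IsTopologicalRing B] [CharZero B]
    {R : Type*} [AddCommGroup R] [Module B R]
    (C : Set R) (hC : @IsCompact R (indLimTopology B R) C) :
    ∃ V : Submodule B R, FiniteDimensional B ↥V ∧ C ⊆ (V : Set R) :=
  compact_subset_finiteDimensional_indLim_general C hC
end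

section
/- Let 0 → V → U_{n+1} → U_n → 0 be a central extension of groups with continuous G-action (G a group acting by automorphisms compatibly with the maps), where V is central in U_{n+1}. Suppose H⁰(G, V) = 0 and the centralizer condition: for every 1-cocycle c_n for U_n, the only element ū ∈ U_n fixed by the c_n-twisted G-action is the identity. Then the natural action of H¹(G, V) on the fibers of the map H¹(G, U_{n+1}) → H¹(G, U_n) is free: if a class v ∈ Z¹(G, V) stabilizes the class of a cocycle c_{n+1} ∈ Z¹(G, U_{n+1}), then v is a coboundary. -/
/-- For a central extension `0 → V → U₁ → U₀ → 0` of groups with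
compatible `G`-action, with `H⁰(G,V) = 0` and the centralizer condition on `U₀`,
the action of `H¹(G,V)` on the fibers of `H¹(G,U₁) → H¹(G,U₀)` is free: if a
cocycle `v` with values in `V` stabilizes the class of a cocycle `c₁`, then `v`
is a coboundary. -/
theorem central_extension_fiber_action_free
    {G V U₁ U₀ : Type*} [Group G] [Group V] [Group U₁] [Group U₀]
    [MulDistribMulAction G V] [MulDistribMulAction G U₁] [MulDistribMulAction G U₀]
    (ι : V →* U₁) (π : U₁ →* U₀)
    (hinj : Function.Injective ι) (hsurj : Function.Surjective π)
    (hker : MonoidHom.ker π = MonoidHom.range ι)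
    (hcent : ∀ v : V, ι v ∈ Subgroup.center U₁)
    (hιeq : ∀ (g : G) (v : V), ι (g • v) = g • ι v)
    (hπeq : ∀ (g : G) (u : U₁), π (g • u) = g • π u)
    (h0 : ∀ v : V, (∀ g : G, g • v = v) → v = 1)
    (hcentralizer : ∀ c₀ : G → U₀, (∀ g₁ g₂ : G, c₀ (g₁ * g₂) = c₀ g₁ * g₁ • c₀ g₂) →
      ∀ u : U₀, (∀ g : G, c₀ g * (g • u) * (c₀ g)⁻¹ = u) → u = 1)
    (c₁ : G → U₁) (hc₁ : ∀ g₁ g₂ : G, c₁ (g₁ * g₂) = c₁ g₁ * g₁ • c₁ g₂)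
    (v : G → V) (hv : ∀ g₁ g₂ : G, v (g₁ * g₂) = v g₁ * g₁ • v g₂)
    (u : U₁) (hu : ∀ g : G, c₁ g * ι (v g) = u⁻¹ * c₁ g * (g • u)) :
    ∃ w : V, ∀ g : G, v g = w⁻¹ * (g • w) := by
  -- π u is fixed by the twisted action for c₀ = π ∘ c₁
  have hπu : π u = 1 := by
    apply hcentralizer (fun g => π (c₁ g))
    · intro g₁ g₂
      simp [hc₁, hπeq]
    · intro g
      have h := congrArg π (hu g)
      have hkerv : π (ι (v g)) = 1 := by
        have : ι (v g) ∈ MonoidHom.ker π := by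
          rw [hker]; exact ⟨v g, rfl⟩
        exact this
      simp only [map_mul, hkerv, mul_one, map_inv, hπeq] at h
      have h' : π u * π (c₁ g) = π (c₁ g) * g • π u := by
        nth_rewrite 1 [h]
        group
      rw [← h']
      group
  -- hence u is in the image of ι
  obtain ⟨w, hw⟩ : u ∈ MonoidHom.range ι := by rw [← hker]; exact hπu
  refine ⟨w, fun g => ?_⟩
  apply hinj
  have h := hu g
  rw [← hw] at h
  have hcomm : ∀ x : V, ∀ y : U₁, ι x * y = y * ι x := fun x y =>
    (Subgroup.mem_center_iff.mp (hcent x) y).symm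
  rw [← hιeq] at h
  have e1 : (ι w)⁻¹ * c₁ g = c₁ g * (ι w)⁻¹ := by
    rw [← map_inv]; exact hcomm w⁻¹ (c₁ g)
  have h2 : c₁ g * ι (v g) = c₁ g * ((ι w)⁻¹ * ι (g • w)) := by
    rw [h, e1, mul_assoc]
  have h3 := mul_left_cancel h2
  rw [← map_inv, ← map_mul] at h3
  exact h3
end

section
/- Let U be a group with a G-action, with descending central series U¹ = U, U^{i+1} = [U, U^i], and quotients U_n = U/U^{n+1}. Suppose H⁰(G, U^i/U^{i+1}) = 0 (trivial fixed points) for every i ≥ 1. Then H⁰(G, U_n) = 0 for every n, i.e. the only G-fixed element of U_n is the identity. The same holds for any twisted G-action by a 1-cocycle with values in a central quotient, provided the twisted fixed points of each graded piece vanish. -/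
theorem Subgroup.mem_of_forall_smul_mul_inv_mem_of_antitone {G U : Type*} [Group U] [SMul G U]
    {H : ℕ → Subgroup U} (hH : Antitone H) (hH₀ : H 0 = ⊤)
    (h : ∀ i, ∀ u ∈ H i, (∀ g : G, g • u * u⁻¹ ∈ H (i + 1)) → u ∈ H (i + 1))
    (n : ℕ) (u : U) (hu : ∀ g : G, g • u * u⁻¹ ∈ H n) : u ∈ H n := by
  induction n with
  | zero => simp [hH₀]
  | succ n ih => exact h n u (ih fun g => hH n.le_succ (hu g)) hu

/-- If, for each `i`, the graded piece
`(lowerCentralSeries U i)/(lowerCentralSeries U (i+1))` has no nontrivial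
`G`-fixed points (stated elementwise), then `H⁰(G, U/U^{n+1}) = 0` for every
`n`: any `u` whose class in `U/lowerCentralSeries U n` is `G`-fixed lies in
`lowerCentralSeries U n`. -/
theorem fixed_points_of_nilpotent_quotients_trivial
    {G U : Type*} [Group G] [Group U] [MulDistribMulAction G U]
    (h : ∀ i : ℕ, ∀ u ∈ (⊤ : Subgroup U).lowerCentralSeries i,
      (∀ g : G, (g • u) * u⁻¹ ∈ (⊤ : Subgroup U).lowerCentralSeries (i + 1)) →
        u ∈ (⊤ : Subgroup U).lowerCentralSeries (i + 1))
    (n : ℕ) (u : U) (hu : ∀ g : G, (g • u) * u⁻¹ ∈ (⊤ : Subgroup U).lowerCentralSeries n) :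
    u ∈ (⊤ : Subgroup U).lowerCentralSeries n :=
  Subgroup.mem_of_forall_smul_mul_inv_mem_of_antitone
    (Subgroup.lowerCentralSeries_antitone _) rfl h n u hu
end

section
/- Let U be a unipotent algebraic group over a field F of characteristic zero, and let φ : U → U be an algebraic group automorphism such that the induced map on the abelianization U/[U,U] has no eigenvalue 1 (equivalently, id − φ is invertible on each graded piece of the descending central series). Then the Lang map L : U → U, g ↦ g⁻¹φ(g), is bijective on F-points. -/
/-!
Write `L g = g⁻¹ * φ g` and `γₖ` for the lower central series, so `L (g * h) = h⁻¹ * L g * φ h`.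
If `h` and `L g * v⁻¹` lie in `γₖ`, both are central modulo `γₖ₊₁`, hence
`L (g * h) * v⁻¹ ≡ L h * (L g * v⁻¹) (mod γₖ₊₁)`. Surjectivity of `L` on `γₖ / γₖ₊₁` therefore
improves an approximate preimage of `v` by one step of the series, and nilpotency ends the
process. For injectivity, `L g = L h` means that `h * g⁻¹` is fixed by `φ`, and injectivity of `L`
on the graded pieces pushes a fixed point down the whole series.
-/

open Subgroup
open scoped commutatorElement

section

variable {G : Type*} [Group G]

theorem Subgroup.map_mem_top_lowerCentralSeries {H : Type*} [Group H] (f : G →* H) {k : ℕ}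
    {g : G} (hg : g ∈ (⊤ : Subgroup G).lowerCentralSeries k) :
    f g ∈ (⊤ : Subgroup H).lowerCentralSeries k := by
  have hmap := mem_map_of_mem f hg
  rw [map_lowerCentralSeries] at hmap
  exact lowerCentralSeries_mono k le_top hmap

def langMap (φ : G →* G) (g : G) : G := g⁻¹ * φ g

variable (φ : G →* G)

def LangGradedInjective : Prop :=
  ∀ i : ℕ, ∀ u ∈ (⊤ : Subgroup G).lowerCentralSeries i,
    langMap φ u ∈ (⊤ : Subgroup G).lowerCentralSeries (i + 1) →
      u ∈ (⊤ : Subgroup G).lowerCentralSeries (i + 1)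

def LangGradedSurjective : Prop :=
  ∀ i : ℕ, ∀ v ∈ (⊤ : Subgroup G).lowerCentralSeries i,
    ∃ u ∈ (⊤ : Subgroup G).lowerCentralSeries i,
      langMap φ u * v⁻¹ ∈ (⊤ : Subgroup G).lowerCentralSeries (i + 1)

theorem langMap_mul (g h : G) : langMap φ (g * h) = h⁻¹ * langMap φ g * φ h := by
  simp only [langMap, map_mul, mul_inv_rev, mul_assoc]

theorem langMap_eq_one_iff {g : G} : langMap φ g = 1 ↔ φ g = g := by
  rw [langMap, inv_mul_eq_one, eq_comm]

theorem langMap_eq_langMap_iff {g h : G} :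
    langMap φ g = langMap φ h ↔ φ (h * g⁻¹) = h * g⁻¹ := by
  rw [langMap, langMap, map_mul, map_inv, mul_inv_eq_iff_eq_mul, eq_comm, inv_mul_eq_iff_eq_mul,
    ← mul_assoc]

theorem mem_lowerCentralSeries_of_map_eq_self (hinj : LangGradedInjective φ) {g : G}
    (hg : φ g = g) (k : ℕ) : g ∈ (⊤ : Subgroup G).lowerCentralSeries k := by
  induction k with
  | zero => exact mem_top g
  | succ k ih => exact hinj k g ih ((langMap_eq_one_iff φ).mpr hg ▸ one_mem _)

theorem langMap_injective [Group.IsNilpotent G] (hinj : LangGradedInjective φ) :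
    Function.Injective (langMap φ) := by
  intro g h hgh
  have hfixed := mem_lowerCentralSeries_of_map_eq_self φ hinj
    ((langMap_eq_langMap_iff φ).mp hgh) (Group.nilpotencyClass G)
  rw [Subgroup.lowerCentralSeries_nilpotencyClass, mem_bot, mul_inv_eq_one] at hfixed
  exact hfixed.symm

theorem langMap_mul_mul_inv_mem_lowerCentralSeries_succ {k : ℕ} {g h v : G}
    (hg : langMap φ g * v⁻¹ ∈ (⊤ : Subgroup G).lowerCentralSeries k)
    (hh : h ∈ (⊤ : Subgroup G).lowerCentralSeries k)
    (hstep : langMap φ h * (langMap φ g * v⁻¹) ∈ (⊤ : Subgroup G).lowerCentralSeries (k + 1)) :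
    langMap φ (g * h) * v⁻¹ ∈ (⊤ : Subgroup G).lowerCentralSeries (k + 1) := by
  set w := langMap φ g * v⁻¹
  have hcentral := Subgroup.lowerCentralSeries_isDescendingCentralSeries (G := G) |>.2
  have hw : ⁅w⁻¹, (φ h)⁻¹⁆ ∈ (⊤ : Subgroup G).lowerCentralSeries (k + 1) :=
    hcentral _ k (inv_mem hg) _
  have hφh : ⁅(φ h)⁻¹, v⁆ ∈ (⊤ : Subgroup G).lowerCentralSeries (k + 1) :=
    hcentral _ k (inv_mem (map_mem_top_lowerCentralSeries φ hh)) v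
  have hdecomp : langMap φ (g * h) * v⁻¹ =
      langMap φ h * w * ⁅w⁻¹, (φ h)⁻¹⁆ * ⁅(φ h)⁻¹, v⁆ := by
    rw [langMap_mul]
    simp only [w, langMap, commutatorElement_def]
    group
  rw [hdecomp]
  exact mul_mem (mul_mem hstep hw) hφh

theorem exists_langMap_mul_inv_mem_lowerCentralSeries (hsurj : LangGradedSurjective φ)
    (v : G) (k : ℕ) : ∃ g, langMap φ g * v⁻¹ ∈ (⊤ : Subgroup G).lowerCentralSeries k := by
  induction k with
  | zero => exact ⟨1, mem_top _⟩
  | succ k ih =>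
    obtain ⟨g, hg⟩ := ih
    obtain ⟨h, hh, hstep⟩ := hsurj k _ (inv_mem hg)
    rw [inv_inv] at hstep
    exact ⟨g * h, langMap_mul_mul_inv_mem_lowerCentralSeries_succ φ hg hh hstep⟩

theorem langMap_surjective [Group.IsNilpotent G] (hsurj : LangGradedSurjective φ) :
    Function.Surjective (langMap φ) := by
  intro v
  obtain ⟨g, hg⟩ :=
    exists_langMap_mul_inv_mem_lowerCentralSeries φ hsurj v (Group.nilpotencyClass G)
  rw [Subgroup.lowerCentralSeries_nilpotencyClass, mem_bot, mul_inv_eq_one] at hg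
  exact ⟨g, hg⟩

end

/-- (Lang's theorem for unipotent groups, abstracted to the
nilpotent group of `F`-points.) Let `U` be a nilpotent group (the points of a
unipotent algebraic group over a field of characteristic zero) and `φ` an
automorphism such that `id − φ` is invertible on each graded piece of the
descending central series (i.e. the induced Lang map on each graded piece is
surjective and injective). Then the Lang map `g ↦ g⁻¹ * φ g` is bijective. -/
theorem lang_map_bijective {U : Type*} [Group U] [Group.IsNilpotent U] (φ : U ≃* U)
    (hsurj : ∀ i : ℕ, ∀ v ∈ (⊤ : Subgroup U).lowerCentralSeries i, ∃ u ∈ (⊤ : Subgroup U).lowerCentralSeries i,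
      (u⁻¹ * φ u) * v⁻¹ ∈ (⊤ : Subgroup U).lowerCentralSeries (i + 1))
    (hinj : ∀ i : ℕ, ∀ u ∈ (⊤ : Subgroup U).lowerCentralSeries i,
      u⁻¹ * φ u ∈ (⊤ : Subgroup U).lowerCentralSeries (i + 1) → u ∈ (⊤ : Subgroup U).lowerCentralSeries (i + 1)) :
    Function.Bijective (fun u : U => u⁻¹ * φ u) :=
  ⟨langMap_injective (φ : U →* U) hinj, langMap_surjective (φ : U →* U) hsurj⟩
end
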